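/- Let G be a finite 2-group with center C such that G/C = ⟨aC⟩ × ⟨bC⟩ is a direct product of two groups of order two and the commutator subgroup G' = ⟨e⟩ has order two. If x = x₀ + x₁a + x₂b + x₃ab ∈ V_⊙(ℤ₂G) with x₀, x₁, x₂, x₃ ∈ ℤ₂C and χ(x₀) = 1, then χ(x₁) = χ(x₂) = χ(x₃) = 0, where χ denotes the augmentation map of ℤ₂C. -/

import Mathlib

/-- The group algebra of `G` over the field `ℤ₂` with two elements. -/
abbrev R2 (G : Type*) [Group G] := MonoidAlgebra (ZMod 2) G

/-- The image of a group element in the group algebra. -/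
noncomputable def emb {G : Type*} [Group G] (g : G) : R2 G := MonoidAlgebra.single g 1

/-- The augmentation map: the sum of the coefficients. -/
def aug {G : Type*} [Group G] (x : R2 G) : ZMod 2 := Finsupp.sum x.coeff fun _ c => c

/-- The canonical embedding of `G` into the unit group of its group algebra. -/
noncomputable def iota (G : Type*) [Group G] : G →* (R2 G)ˣ :=
  (Units.map (MonoidAlgebra.of (ZMod 2) G)).comp toUnits.toMonoidHom

open Classical in
/-- The map `g ↦ g` for `g ∈ C = Z(G)` and `g ↦ ge` for `g ∉ C`. -/
noncomputable def sigmaMap (G : Type*) [Group G] (e : G) : G → G :=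
  fun g => if g ∈ Subgroup.center G then g else g * e

/-- The involution `⊙` of `ℤ₂G`: the linear extension of `g ↦ g` for `g ∈ C = Z(G)`
and `g ↦ ge` for `g ∉ C`. -/
noncomputable def odot {G : Type*} [Group G] (e : G) (x : R2 G) : R2 G :=
  MonoidAlgebra.ofCoeff (Finsupp.mapDomain (sigmaMap G e) x.coeff)

/-- The set of unitary normalized units: `V_⊙(ℤ₂G) = {u ∈ V(ℤ₂G) : u⊙ = u⁻¹}`. -/
noncomputable def VodotSet (G : Type*) [Group G] (e : G) : Set (R2 G)ˣ :=
  {u | aug (u : R2 G) = 1 ∧ odot e (u : R2 G) = ((u⁻¹ : (R2 G)ˣ) : R2 G)}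

/-- Membership in the ideal `(1 + e)ℤ₂C` of `ℤ₂C`, where `C = Z(G)`. -/
noncomputable def InIdC {G : Type*} [Group G] (e : G) (x : R2 G) : Prop :=
  ∃ u : R2 G, ↑u.coeff.support ⊆ (Subgroup.center G : Set G) ∧ x = (1 + emb e) * u

/-- The set `W = {1 + y₁a + y₂b + y₃ab : yᵢ ∈ (1 + e)ℤ₂C}` inside the unit group. -/
noncomputable def WsetB {G : Type*} [Group G] (e a b : G) : Set (R2 G)ˣ :=
  {w | ∃ y₁ y₂ y₃ : R2 G, InIdC e y₁ ∧ InIdC e y₂ ∧ InIdC e y₃ ∧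
    (w : R2 G) = 1 + y₁ * emb a + y₂ * emb b + y₃ * (emb a * emb b)}

/-- The set `V(ℤ₂C)[2]` of normalized units of `ℤ₂C` of order dividing 2, where `C = Z(G)`. -/
noncomputable def V2Set (G : Type*) [Group G] : Set (R2 G)ˣ :=
  {u | ↑(u : R2 G).coeff.support ⊆ (Subgroup.center G : Set G) ∧ aug (u : R2 G) = 1 ∧ u * u = 1}


/-!
Since `G' = ⟨e⟩` is normal of order two, `e` is central; since `a` and `b` generate `G` modulo
`C`, they do not commute, so `ba = eab`. As `C, aC, bC, abC` are distinct cosets,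
`ℤ₂G ⊇ ℤ₂C ⊕ ℤ₂C a ⊕ ℤ₂C b ⊕ ℤ₂C ab`, and `x⊙` arises from `x` by multiplying its components at
`a`, `b`, `ab` by `e`. Expanding `x x⊙ = 1` (a computation over the commutative ring `ℤ₂C`), the
components at `a`, `b`, `ab` say `(1 + e) y = 0` for `y = x₀x₁ + e b² x₂x₃`, `x₀x₂ + e a² x₁x₃`,
`x₀x₃ + e x₁x₂`. Such a `y` has augmentation zero, which together with `χ(x₀) = 1` gives
`χ(x₁) = χ(x₂)χ(x₃)` and its permutations; with `χ(x) = χ(x₀) + χ(x₁) + χ(x₂) + χ(x₃) = 1`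
this forces `χ(x₁) = χ(x₂) = χ(x₃) = 0` in `ℤ₂`.
-/

section GroupTheory

open Subgroup
open scoped commutatorElement

variable {G : Type*} [Group G]

theorem eq_one_or_eq_of_mem_zpowers {x y : G} (hx : orderOf x = 2) (hy : y ∈ zpowers x) :
    y = 1 ∨ y = x := by
  obtain ⟨k, rfl⟩ := mem_zpowers_iff.mp hy
  rw [← zpow_mod_orderOf, hx]
  rcases Int.emod_two_eq k with h | h <;> simp [h]

theorem mem_center_of_zpowers_normal {e : G} (he : orderOf e = 2) [(zpowers e).Normal] :
    e ∈ center G := by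
  refine mem_center_iff.mpr fun g => ?_
  have hconj : g * e * g⁻¹ ∈ zpowers e := Normal.conj_mem inferInstance e (mem_zpowers e) g
  rcases eq_one_or_eq_of_mem_zpowers he hconj with h | h
  · rw [mul_inv_eq_one, mul_eq_left] at h
    simp [h] at he
  · rwa [mul_inv_eq_iff_eq_mul] at h

theorem mem_center_of_commute {a b : G}
    (hsup : zpowers (a : G ⧸ center G) ⊔ zpowers (b : G ⧸ center G) = ⊤) (hab : Commute a b) :
    a ∈ center G := by
  let H := centralizer {a}
  have hmap : H.map (QuotientGroup.mk' (center G)) = ⊤ := by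
    rw [eq_top_iff, ← hsup, sup_le_iff, zpowers_le, zpowers_le]
    exact ⟨⟨a, mem_centralizer_singleton_iff.mpr rfl, rfl⟩,
      ⟨b, mem_centralizer_singleton_iff.mpr hab.eq.symm, rfl⟩⟩
  have hH : H = ⊤ := by
    rw [← comap_map_eq_self (show (QuotientGroup.mk' (center G)).ker ≤ H by
      rw [QuotientGroup.ker_mk']; exact center_le_centralizer _), hmap, comap_top]
  refine mem_center_iff.mpr fun g => ?_
  have hg : g ∈ H := hH ▸ mem_top g
  exact mem_centralizer_singleton_iff.mp hg

theorem mul_eq_mul_mul_of_not_commute {e a b : G} (hcomm : commutator G = zpowers e)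
    (he : orderOf e = 2) (hab : ¬Commute a b) : b * a = e * (a * b) := by
  have hmem : ⁅b, a⁆ ∈ zpowers e := hcomm ▸ commutator_mem_commutator (mem_top b) (mem_top a)
  rcases eq_one_or_eq_of_mem_zpowers he hmem with h | h
  · exact absurd (commutatorElement_eq_one_iff_commute.mp h).symm hab
  · rw [← h, commutatorElement_def]; group

theorem injective_klein_four {x y : G} (hx : orderOf x = 2) (hy : orderOf y = 2)
    (hxy : zpowers x ⊓ zpowers y = ⊥) : Function.Injective ![1, x, y, x * y] := by
  have hx1 : x ≠ 1 := by rintro rfl; simp at hx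
  have hy1 : y ≠ 1 := by rintro rfl; simp at hy
  have hne : x ≠ y := fun h => hx1 <| by
    simpa [hxy] using (mem_inf.mpr ⟨mem_zpowers x, h ▸ mem_zpowers y⟩ : x ∈ zpowers x ⊓ zpowers y)
  have hxy1 : x * y ≠ 1 := fun h => hne <| by
    rw [← inv_eq_of_mul_eq_one_right h, ← mul_eq_one_iff_eq_inv, ← pow_two, ← hx,
      pow_orderOf_eq_one]
  intro i j h
  fin_cases i <;> fin_cases j <;> simp_all [eq_comm]

theorem mul_self_mem_of_orderOf_mk_eq_two {N : Subgroup G} [N.Normal] {g : G}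
    (hg : orderOf (g : G ⧸ N) = 2) : g * g ∈ N := by
  rw [← QuotientGroup.eq_one_iff, QuotientGroup.mk_mul, ← pow_two, ← hg, pow_orderOf_eq_one]

end GroupTheory

section GroupAlgebra

open Subgroup MonoidAlgebra

variable {G : Type*} [Group G]

theorem emb_mul (g h : G) : emb (g * h) = emb g * emb h := by
  simp [emb, single_mul_single]

theorem emb_one : emb (1 : G) = 1 := rfl

theorem coeff_mul_emb (x : R2 G) (g h : G) : (x * emb g).coeff h = x.coeff (h * g⁻¹) := by
  simp [emb]

theorem coeff_emb_mul (x : R2 G) (g h : G) : (emb g * x).coeff h = x.coeff (g⁻¹ * h) := by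
  simp [emb]

/-- The subring `ℤ₂N` of `ℤ₂G`. -/
def supportedSubring (N : Subgroup G) : Subring (R2 G) where
  carrier := {x | ↑x.coeff.support ⊆ (N : Set G)}
  zero_mem' := by simp
  one_mem' := fun g hg => by
    rw [← emb_one, emb, coeff_single, Finset.mem_coe, Finsupp.mem_support_single] at hg
    exact hg.1 ▸ N.one_mem
  add_mem' := fun {x y} hx hy => by
    classical
    exact (Finset.coe_subset.mpr Finsupp.support_add).trans (by simpa using Set.union_subset hx hy)
  neg_mem' := fun hx => by simpa using hx
  mul_mem' := fun {x y} hx hy g hg => by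
    classical
    obtain ⟨g₁, hg₁, g₂, hg₂, rfl⟩ := Finset.mem_mul.mp (support_coeff_mul_subset x y hg)
    exact N.mul_mem (hx hg₁) (hy hg₂)

theorem mem_supportedSubring {N : Subgroup G} {x : R2 G} :
    x ∈ supportedSubring N ↔ ↑x.coeff.support ⊆ (N : Set G) :=
  Iff.rfl

theorem emb_mem_supportedSubring {N : Subgroup G} {g : G} (hg : g ∈ N) :
    emb g ∈ supportedSubring N := fun h hh => by
  rw [emb, coeff_single, Finset.mem_coe, Finsupp.mem_support_single] at hh
  exact hh.1 ▸ hg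

theorem supportedSubring_center_le : supportedSubring (center G) ≤ Subring.center (R2 G) := by
  intro x hx
  refine Subring.mem_center_iff.mpr fun y => (?_ : Commute x y).eq.symm
  rw [← sum_coeff_single x]
  exact Commute.sum_left _ _ _ fun g hg => single_commute
    (fun m => (mem_center_iff.mp (mem_supportedSubring.mp hx hg) m).symm) (Commute.all _) y

end GroupAlgebra

section Decomposition

open Subgroup MonoidAlgebra

variable {G : Type*} [Group G] {N : Subgroup G} [N.Normal]

theorem mk_eq_of_mem_support_mul_emb {x : R2 G} (hx : x ∈ supportedSubring N) {g h : G}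
    (hh : h ∈ (x * emb g).coeff.support) : (h : G ⧸ N) = g := by
  rw [Finsupp.mem_support_iff, coeff_mul_emb] at hh
  exact QuotientGroup.eq_iff_div_mem.mpr (div_eq_mul_inv h g ▸ hx (Finsupp.mem_support_iff.mpr hh))

theorem filter_coeff_mul_emb [DecidableEq (G ⧸ N)] {x : R2 G} (hx : x ∈ supportedSubring N)
    (g : G) (t : G ⧸ N) :
    (x * emb g).coeff.filter (fun h : G => (h : G ⧸ N) = t) =
      if (g : G ⧸ N) = t then (x * emb g).coeff else 0 := by
  split_ifs with hg
  · exact (Finsupp.filter_eq_self_iff _ _).mpr fun h hh =>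
      (mk_eq_of_mem_support_mul_emb hx (Finsupp.mem_support_iff.mpr hh)).trans hg
  · refine (Finsupp.filter_eq_zero_iff _ _).mpr fun h ht => ?_
    by_contra hh
    exact hg ((mk_eq_of_mem_support_mul_emb hx (Finsupp.mem_support_iff.mpr hh)).symm.trans ht)

theorem eq_zero_of_sum_mul_emb_eq_zero {ι : Type*} [Fintype ι] {T : ι → R2 G} {g : ι → G}
    (hT : ∀ i, T i ∈ supportedSubring N) (hg : Function.Injective fun i => (g i : G ⧸ N))
    (h : ∑ i, T i * emb (g i) = 0) (i : ι) : T i = 0 := by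
  classical
  have hi : T i * emb (g i) = 0 := by
    have := congrArg (fun z : R2 G => z.coeff.filter (fun h : G => (h : G ⧸ N) = g i)) h
    simpa [coeff_sum, Finsupp.filter_sum, filter_coeff_mul_emb (hT _), hg.eq_iff,
      Finsupp.filter_zero] using this
  calc T i = T i * emb (g i) * emb (g i)⁻¹ := by
        rw [mul_assoc, ← emb_mul, mul_inv_cancel, emb_one, mul_one]
    _ = 0 := by rw [hi, zero_mul]

theorem eq_zero_of_add_mul_emb_eq_one {a b : G}
    (hinj : Function.Injective ![(1 : G ⧸ N), a, b, a * b]) {T₀ T₁ T₂ T₃ : R2 G}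
    (h₀ : T₀ ∈ supportedSubring N) (h₁ : T₁ ∈ supportedSubring N)
    (h₂ : T₂ ∈ supportedSubring N) (h₃ : T₃ ∈ supportedSubring N)
    (h : T₀ + T₁ * emb a + T₂ * emb b + T₃ * (emb a * emb b) = 1) :
    T₁ = 0 ∧ T₂ = 0 ∧ T₃ = 0 := by
  have hsum : ∑ i, ![T₀ - 1, T₁, T₂, T₃] i * emb (![1, a, b, a * b] i) = 0 := by
    rw [← sub_eq_zero.mpr h]
    simp only [Fin.sum_univ_four, Matrix.cons_val_zero, Matrix.cons_val_one, Matrix.cons_val,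
      emb_one, mul_one, emb_mul]
    abel
  have hT := eq_zero_of_sum_mul_emb_eq_zero (N := N) (fun i => ?_) ?_ hsum
  · exact ⟨hT 1, hT 2, hT 3⟩
  · fin_cases i <;> simp [sub_mem, *]
  · convert hinj using 1
    funext i
    fin_cases i <;> rfl

end Decomposition

section Augmentation

open MonoidAlgebra

variable {G : Type*} [Group G]

theorem aug_eq_lift (x : R2 G) : aug x = MonoidAlgebra.lift (ZMod 2) (ZMod 2) G 1 x := by
  simp [aug, MonoidAlgebra.lift_apply]

theorem aug_add (x y : R2 G) : aug (x + y) = aug x + aug y := by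
  simp only [aug_eq_lift, map_add]

theorem aug_mul (x y : R2 G) : aug (x * y) = aug x * aug y := by
  simp only [aug_eq_lift, map_mul]

theorem aug_emb (g : G) : aug (emb g) = 1 := by
  simp [aug_eq_lift, emb]

/-- The coefficients of `y` are constant on the cosets of `⟨e⟩`, so they cancel in pairs. -/
theorem aug_eq_zero_of_one_add_emb_mul_eq_zero {e : G} (he : orderOf e = 2) {y : R2 G}
    (h : (1 + emb e) * y = 0) : aug y = 0 := by
  have he1 : e ≠ 1 := by rintro rfl; simp at he
  have he2 : e * e = 1 := by rw [← pow_two, ← he, pow_orderOf_eq_one]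
  have hy : ∀ g, y.coeff (e * g) = y.coeff g := fun g => by
    have := congrArg (fun z : R2 G => z.coeff (e * g)) h
    simp only [add_mul, one_mul, coeff_add, Finsupp.add_apply, coeff_emb_mul, inv_mul_cancel_left,
      coeff_zero, Finsupp.coe_zero, Pi.zero_apply] at this
    exact CharTwo.add_eq_zero.mp this
  refine Finset.sum_involution (fun g _ => e * g) (fun g _ => by rw [hy, CharTwo.add_self_eq_zero])
    (fun g _ _ hg => he1 (mul_eq_right.mp hg)) (fun g hg => ?_)
    (fun g _ => by rw [← mul_assoc, he2, one_mul])
  rw [Finsupp.mem_support_iff, hy]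
  exact Finsupp.mem_support_iff.mp hg

end Augmentation

section Involution

open Subgroup MonoidAlgebra

variable {G : Type*} [Group G]

theorem odot_add (e : G) (x y : R2 G) : odot e (x + y) = odot e x + odot e y := by
  simp only [odot, coeff_add, Finsupp.mapDomain_add, ofCoeff_add]

theorem odot_of_mem {e : G} {x : R2 G} (hx : x ∈ supportedSubring (center G)) : odot e x = x := by
  rw [odot, Finsupp.mapDomain_congr (g := id), Finsupp.mapDomain_id, ofCoeff_coeff]
  intro g hg
  have hgC : g ∈ center G := mem_supportedSubring.mp hx hg
  simp [sigmaMap, hgC]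

theorem mul_emb_eq_ofCoeff_mapDomain (x : R2 G) (g : G) :
    x * emb g = ofCoeff (Finsupp.mapDomain (· * g) x.coeff) := by
  ext h
  rw [coeff_mul_emb, coeff_ofCoeff, ← Finsupp.mapDomain_apply (mul_left_injective g),
    inv_mul_cancel_right]

theorem odot_mul_emb {e : G} {x : R2 G} (hx : x ∈ supportedSubring (center G)) {g : G}
    (hg : (g : G ⧸ center G) ≠ 1) : odot e (x * emb g) = x * emb g * emb e := by
  rw [odot, Finsupp.mapDomain_congr (g := (· * e)), ← mul_emb_eq_ofCoeff_mapDomain]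
  intro h hh
  have hhC : h ∉ center G := by
    rw [← QuotientGroup.eq_one_iff, mk_eq_of_mem_support_mul_emb hx hh]
    exact hg
  simp [sigmaMap, hhC]

end Involution

theorem klein_mul_expansion {K R : Type*} [CommRing K] [Ring R] [Algebra K R] {A B : R}
    {α β ε : K} (hA : A * A = algebraMap K R α) (hB : B * B = algebraMap K R β)
    (hBA : B * A = ε • (A * B)) (x₀ x₁ x₂ x₃ : K) :
    (x₀ • 1 + x₁ • A + x₂ • B + x₃ • (A * B)) *
        (x₀ • 1 + (ε * x₁) • A + (ε * x₂) • B + (ε * x₃) • (A * B)) =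
      (x₀ * x₀ + ε * (α * x₁ * x₁ + β * x₂ * x₂ + ε * α * β * x₃ * x₃)) • 1 +
        ((1 + ε) * (x₀ * x₁ + ε * β * x₂ * x₃)) • A +
        ((1 + ε) * (x₀ * x₂ + ε * α * x₁ * x₃)) • B +
        ((1 + ε) * (x₀ * x₃ + ε * x₁ * x₂)) • (A * B) := by
  have hA' : ∀ Z : R, A * (A * Z) = α • Z := fun Z => by
    rw [← mul_assoc, hA, Algebra.smul_def]
  have hBA' : ∀ Z : R, B * (A * Z) = ε • (A * (B * Z)) := fun Z => by
    rw [← mul_assoc, hBA, smul_mul_assoc, mul_assoc]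
  simp only [add_mul, mul_add, smul_add, smul_mul_assoc, mul_smul_comm, smul_smul, one_mul, mul_one,
    mul_assoc, hA', hBA', hBA, hA, hB, Algebra.algebraMap_eq_smul_one]
  module

section Components

open Subgroup

variable {G : Type*} [Group G]

theorem odot_add_mul_emb {e a b : G} (heC : e ∈ center G)
    (hinj : Function.Injective ![(1 : G ⧸ center G), a, b, a * b]) {x₀ x₁ x₂ x₃ : R2 G}
    (h₀ : x₀ ∈ supportedSubring (center G)) (h₁ : x₁ ∈ supportedSubring (center G))
    (h₂ : x₂ ∈ supportedSubring (center G)) (h₃ : x₃ ∈ supportedSubring (center G)) :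
    odot e (x₀ + x₁ * emb a + x₂ * emb b + x₃ * (emb a * emb b)) =
      x₀ + emb e * x₁ * emb a + emb e * x₂ * emb b + emb e * x₃ * (emb a * emb b) := by
  have hE := Subring.mem_center_iff.mp (supportedSubring_center_le (emb_mem_supportedSubring heC))
  rw [odot_add, odot_add, odot_add, odot_of_mem h₀,
    odot_mul_emb h₁ (hinj.ne (by decide : (1 : Fin 4) ≠ 0)),
    odot_mul_emb h₂ (hinj.ne (by decide : (2 : Fin 4) ≠ 0)), ← emb_mul,
    odot_mul_emb h₃ (hinj.ne (by decide : (3 : Fin 4) ≠ 0))]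
  simp only [emb_mul, hE, mul_assoc]

theorem one_add_emb_mul_eq_zero_of_mul_odot_eq_one {e a b : G} (heC : e ∈ center G)
    (haC : a * a ∈ center G) (hbC : b * b ∈ center G) (hba : b * a = e * (a * b))
    (hinj : Function.Injective ![(1 : G ⧸ center G), a, b, a * b]) {x₀ x₁ x₂ x₃ : R2 G}
    (h₀ : x₀ ∈ supportedSubring (center G)) (h₁ : x₁ ∈ supportedSubring (center G))
    (h₂ : x₂ ∈ supportedSubring (center G)) (h₃ : x₃ ∈ supportedSubring (center G))
    (hu : (x₀ + x₁ * emb a + x₂ * emb b + x₃ * (emb a * emb b)) *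
      odot e (x₀ + x₁ * emb a + x₂ * emb b + x₃ * (emb a * emb b)) = 1) :
    (1 + emb e) * (x₀ * x₁ + emb e * emb (b * b) * x₂ * x₃) = 0 ∧
      (1 + emb e) * (x₀ * x₂ + emb e * emb (a * a) * x₁ * x₃) = 0 ∧
      (1 + emb e) * (x₀ * x₃ + emb e * x₁ * x₂) = 0 := by
  have hE := emb_mem_supportedSubring heC
  have hα := emb_mem_supportedSubring haC
  have hβ := emb_mem_supportedSubring hbC
  have key := klein_mul_expansion (K := Subring.center (R2 G)) (A := emb a) (B := emb b)
    (α := ⟨_, supportedSubring_center_le hα⟩) (β := ⟨_, supportedSubring_center_le hβ⟩)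
    (ε := ⟨_, supportedSubring_center_le hE⟩) (emb_mul a a).symm (emb_mul b b).symm
    (show emb b * emb a = emb e * (emb a * emb b) by rw [← emb_mul, ← emb_mul, ← emb_mul, hba])
    ⟨x₀, supportedSubring_center_le h₀⟩ ⟨x₁, supportedSubring_center_le h₁⟩
    ⟨x₂, supportedSubring_center_le h₂⟩ ⟨x₃, supportedSubring_center_le h₃⟩
  simp only [Subring.smul_def, Subring.coe_mul, Subring.coe_add, Subring.coe_one, smul_eq_mul,
    mul_one] at key
  rw [odot_add_mul_emb heC hinj h₀ h₁ h₂ h₃, key] at hu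
  refine eq_zero_of_add_mul_emb_eq_one hinj ?_ ?_ ?_ ?_ hu <;>
    apply_rules [add_mem, mul_mem, one_mem]

end Components

theorem stmt_16_general
 {G : Type*} [Group G]
    (e : G) (hcomm : commutator G = Subgroup.zpowers e) (he : orderOf e = 2)
    (a b : G)
    (ha : orderOf ((a : G ⧸ Subgroup.center G)) = 2)
    (hb : orderOf ((b : G ⧸ Subgroup.center G)) = 2)
    (hinf : Subgroup.zpowers ((a : G ⧸ Subgroup.center G)) ⊓
      Subgroup.zpowers ((b : G ⧸ Subgroup.center G)) = ⊥)
    (hsup : Subgroup.zpowers ((a : G ⧸ Subgroup.center G)) ⊔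
      Subgroup.zpowers ((b : G ⧸ Subgroup.center G)) = ⊤)
    :
    ∀ u : (R2 G)ˣ, u ∈ VodotSet G e →
      ∀ x₀ x₁ x₂ x₃ : R2 G,
        ↑x₀.coeff.support ⊆ (Subgroup.center G : Set G) →
        ↑x₁.coeff.support ⊆ (Subgroup.center G : Set G) →
        ↑x₂.coeff.support ⊆ (Subgroup.center G : Set G) →
        ↑x₃.coeff.support ⊆ (Subgroup.center G : Set G) →
        (u : R2 G) = x₀ + x₁ * emb a + x₂ * emb b + x₃ * (emb a * emb b) →
        aug x₀ = 1 →
        (aug x₁ = 0 ∧ aug x₂ = 0 ∧ aug x₃ = 0) := by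
  rintro u ⟨hu_aug, hu_odot⟩ x₀ x₁ x₂ x₃ h₀ h₁ h₂ h₃ hu hx₀
  have hu_unitary : (u : R2 G) * odot e u = 1 := hu_odot ▸ u.mul_inv
  rw [hu] at hu_aug hu_unitary
  have heC : e ∈ Subgroup.center G := by
    have : (Subgroup.zpowers e).Normal := hcomm ▸ Subgroup.commutator_normal ⊤ ⊤
    exact mem_center_of_zpowers_normal he
  have hinj := injective_klein_four ha hb hinf
  have hba : b * a = e * (a * b) := mul_eq_mul_mul_of_not_commute hcomm he fun h =>
    hinj.ne (by decide : (1 : Fin 4) ≠ 0)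
      ((QuotientGroup.eq_one_iff a).mpr (mem_center_of_commute hsup h))
  obtain ⟨E₁, E₂, E₃⟩ := one_add_emb_mul_eq_zero_of_mul_odot_eq_one heC
    (mul_self_mem_of_orderOf_mk_eq_two ha) (mul_self_mem_of_orderOf_mk_eq_two hb) hba hinj
    h₀ h₁ h₂ h₃ hu_unitary
  have A₁ := aug_eq_zero_of_one_add_emb_mul_eq_zero he E₁
  have A₂ := aug_eq_zero_of_one_add_emb_mul_eq_zero he E₂
  have A₃ := aug_eq_zero_of_one_add_emb_mul_eq_zero he E₃
  simp only [aug_add, aug_mul, aug_emb, one_mul, hx₀] at hu_aug A₁ A₂ A₃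
  revert hu_aug A₁ A₂ A₃
  generalize aug x₁ = s₁, aug x₂ = s₂, aug x₃ = s₃
  decide +revert

/-- If `x = x₀ + x₁a + x₂b + x₃ab ∈ V_⊙(ℤ₂G)` with `x₀, x₁, x₂, x₃ ∈ ℤ₂C` and `χ(x₀) = 1`,
then `χ(x₁) = χ(x₂) = χ(x₃) = 0`. -/
theorem stmt_16
 {G : Type*} [Group G] [Fintype G] (hG : IsPGroup 2 G)
    (e : G) (hcomm : commutator G = Subgroup.zpowers e) (he : orderOf e = 2)
    (a b : G)
    (ha : orderOf ((a : G ⧸ Subgroup.center G)) = 2)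
    (hb : orderOf ((b : G ⧸ Subgroup.center G)) = 2)
    (hab : ((a : G ⧸ Subgroup.center G)) * b = (b : G ⧸ Subgroup.center G) * a)
    (hinf : Subgroup.zpowers ((a : G ⧸ Subgroup.center G)) ⊓
      Subgroup.zpowers ((b : G ⧸ Subgroup.center G)) = ⊥)
    (hsup : Subgroup.zpowers ((a : G ⧸ Subgroup.center G)) ⊔
      Subgroup.zpowers ((b : G ⧸ Subgroup.center G)) = ⊤)
    :
    ∀ u : (R2 G)ˣ, u ∈ VodotSet G e →
      ∀ x₀ x₁ x₂ x₃ : R2 G,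
        ↑x₀.coeff.support ⊆ (Subgroup.center G : Set G) →
        ↑x₁.coeff.support ⊆ (Subgroup.center G : Set G) →
        ↑x₂.coeff.support ⊆ (Subgroup.center G : Set G) →
        ↑x₃.coeff.support ⊆ (Subgroup.center G : Set G) →
        (u : R2 G) = x₀ + x₁ * emb a + x₂ * emb b + x₃ * (emb a * emb b) →
        aug x₀ = 1 →
        (aug x₁ = 0 ∧ aug x₂ = 0 ∧ aug x₃ = 0) :=
  stmt_16_general e hcomm he a b ha hb hinf hsup
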